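/- There exists a constant C > 0 with the following property. Define F₂(t) = ∫₁^t exp(−ν(γ₁(t) − γ₁(s))) f₂(s) ds for t ∈ [1,T], where f₂ : [1,T] → ℂ is continuous. Then sup_{t ∈ [1,T]} e^{a ν^{1/3} t} |F₂(t)| ≤ C ν^{−1/6} (∫₁^T e^{2 a ν^{1/3} s} |f₂(s)|² ds)^{1/2}, and ∫₁^T e^{2 a ν^{1/3} t} |F₂(t)|² dt ≤ C ν^{−2/3} ∫₁^T e^{2 a ν^{1/3} s} |f₂(s)|² ds. The constant C is independent of ν, T, a, k, l, η, f₂. -/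

import Mathlib

/-!
Since `γ(u) ≥ (2π)² (u - η/k)²`, the phase grows cubically: `γ₁ t - γ₁ s ≥ 3 (t - s)³`. With
`μ = ν^{1/3}` and `x = μ (t - s)`, the elementary bound `a x - 3 x³ ≤ 3 - x` (for `a ≤ 4`) then
dominates the weighted Duhamel kernel `e^{a μ (t - s)} e^{-ν (γ₁ t - γ₁ s)}` by `e³ e^{-μ (t - s)}`.
Everything reduces to convolution with `e^{-μ t}` on `[1, T]`, whose `L¹` norm is at most `1/μ`:
Cauchy–Schwarz gives `(∫ e^{-μ(t-s)} g)² ≤ μ⁻¹ ∫ e^{-μ(t-s)} g²`, which yields the sup bound, and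
integrating once more in `t` costs another factor `μ⁻¹`.
-/

open MeasureTheory Real Set Topology

/-- The symbol of `-Δ` at frequency `(k, η, l)` transported along the Couette shear. -/
noncomputable def shearSymbol (k l : ℤ) (η t : ℝ) : ℝ :=
  (2 * π) ^ 2 * ((k : ℝ) ^ 2 + (η - k * t) ^ 2 + (l : ℝ) ^ 2)

lemma cube_le_twelve_mul_integral_sq_sub (b : ℝ) {s t : ℝ} (hst : s ≤ t) :
    (t - s) ^ 3 ≤ 12 * ∫ u in s..t, (u - b) ^ 2 := by
  rw [intervalIntegral.integral_comp_sub_right (· ^ 2), integral_pow]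
  nlinarith [mul_nonneg (sub_nonneg.2 hst) (sq_nonneg (t + s - 2 * b))]

lemma three_mul_cube_le_integral_shearSymbol {k : ℤ} (hk : k ≠ 0) (l : ℤ) (η : ℝ) {s t : ℝ}
    (hst : s ≤ t) : 3 * (t - s) ^ 3 ≤ ∫ u in s..t, shearSymbol k l η u := by
  have hk1 : (1 : ℝ) ≤ (k : ℝ) ^ 2 := by
    rw [one_le_sq_iff_one_le_abs]; exact_mod_cast Int.one_le_abs hk
  have hpi : (36 : ℝ) ≤ (2 * π) ^ 2 := by nlinarith [pi_gt_three]
  have hpt : ∀ u ∈ Icc s t, 36 * (u - η / k) ^ 2 ≤ shearSymbol k l η u := by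
    intro u _
    rw [shearSymbol]
    have hscale : (η - k * u) ^ 2 = (k : ℝ) ^ 2 * (u - η / k) ^ 2 := by
      field_simp; ring
    nlinarith [sq_nonneg (u - η / k), sq_nonneg (l : ℝ), sq_nonneg (k : ℝ),
      mul_le_mul_of_nonneg_right hk1 (sq_nonneg (u - η / k))]
  calc 3 * (t - s) ^ 3 ≤ ∫ u in s..t, 36 * (u - η / k) ^ 2 := by
        rw [intervalIntegral.integral_const_mul]
        linarith [cube_le_twelve_mul_integral_sq_sub (η / k) hst]
    _ ≤ _ := intervalIntegral.integral_mono_on hst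
      (Continuous.intervalIntegrable (by fun_prop) _ _)
      (Continuous.intervalIntegrable (by unfold shearSymbol; fun_prop) _ _) hpt

lemma three_mul_cube_le_sub_of_primitive {k : ℤ} (hk : k ≠ 0) {l : ℤ} {η c : ℝ} {γ₁ : ℝ → ℝ}
    (hγ₁ : ∀ t, γ₁ t = ∫ s in c..t, shearSymbol k l η s) {s t : ℝ} (hst : s ≤ t) :
    3 * (t - s) ^ 3 ≤ γ₁ t - γ₁ s := by
  have hint : ∀ a b, IntervalIntegrable (shearSymbol k l η) volume a b :=
    Continuous.intervalIntegrable (by unfold shearSymbol; fun_prop)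
  rw [hγ₁, hγ₁, intervalIntegral.integral_interval_sub_left (hint _ _) (hint _ _)]
  exact three_mul_cube_le_integral_shearSymbol hk l η hst

lemma mul_sub_three_mul_cube_le {a x : ℝ} (ha : a ≤ 4) (hx : 0 ≤ x) :
    a * x - 3 * x ^ 3 ≤ 3 - x := by
  nlinarith [mul_nonneg hx (sq_nonneg (x - 1)), sq_nonneg (3 * x - 2),
    mul_le_mul_of_nonneg_right ha hx]

lemma exp_mul_exp_neg_cube_le {a μ s t D : ℝ} (ha : a ≤ 4) (hμ : 0 ≤ μ) (hst : s ≤ t)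
    (hD : 3 * (t - s) ^ 3 ≤ D) :
    exp (a * μ * t) * exp (-(μ ^ 3 * D)) ≤
      exp 3 * exp (-(μ * (t - s))) * exp (a * μ * s) := by
  simp only [← exp_add]
  apply exp_le_exp.2
  have := mul_sub_three_mul_cube_le ha (mul_nonneg hμ (sub_nonneg.2 hst))
  nlinarith [mul_le_mul_of_nonneg_left hD (pow_nonneg hμ 3)]

lemma intervalIntegral_mono_of_nonneg {f g : ℝ → ℝ} {c d : ℝ} (hcd : c ≤ d)
    (hf : ∀ x ∈ Icc c d, 0 ≤ f x) (hfg : ∀ x ∈ Icc c d, f x ≤ g x)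
    (hg : IntervalIntegrable g volume c d) : ∫ x in c..d, f x ≤ ∫ x in c..d, g x := by
  rw [intervalIntegral.integral_of_le hcd, intervalIntegral.integral_of_le hcd]
  exact setIntegral_mono_of_nonneg (fun x hx => hf x (Ioc_subset_Icc_self hx))
    (fun x hx => hfg x (Ioc_subset_Icc_self hx)) hg.1

lemma exp_mul_norm_integral_le {a μ ν c t : ℝ} {φ : ℝ → ℝ} {f : ℝ → ℂ} (ha : a ≤ 4)
    (hμ : 0 ≤ μ) (hμν : μ ^ 3 = ν) (hct : c ≤ t)
    (hφ : ∀ s ∈ Icc c t, 3 * (t - s) ^ 3 ≤ φ t - φ s) (hf : ContinuousOn f (Icc c t)) :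
    exp (a * μ * t) * ‖∫ s in c..t, (exp (-(ν * (φ t - φ s))) : ℂ) * f s‖ ≤
      exp 3 * ∫ s in c..t, exp (-(μ * (t - s))) * (exp (a * μ * s) * ‖f s‖) := by
  subst hμν
  calc exp (a * μ * t) * ‖∫ s in c..t, (exp (-(μ ^ 3 * (φ t - φ s))) : ℂ) * f s‖
      ≤ exp (a * μ * t) * ∫ s in c..t, exp (-(μ ^ 3 * (φ t - φ s))) * ‖f s‖ := by
        gcongr
        refine (intervalIntegral.norm_integral_le_integral_norm hct).trans_eq ?_
        simp only [norm_mul, Complex.norm_real, norm_of_nonneg (exp_pos _).le]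
    _ = ∫ s in c..t, exp (a * μ * t) * (exp (-(μ ^ 3 * (φ t - φ s))) * ‖f s‖) :=
        (intervalIntegral.integral_const_mul _ _).symm
    _ ≤ ∫ s in c..t, exp 3 * (exp (-(μ * (t - s))) * (exp (a * μ * s) * ‖f s‖)) := by
        refine intervalIntegral_mono_of_nonneg hct (fun s _ => by positivity) (fun s hs => ?_)
          (ContinuousOn.intervalIntegrable_of_Icc hct (by fun_prop))
        have := exp_mul_exp_neg_cube_le ha hμ hs.2 (hφ s hs)
        calc _ = exp (a * μ * t) * exp (-(μ ^ 3 * (φ t - φ s))) * ‖f s‖ := by ring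
          _ ≤ exp 3 * exp (-(μ * (t - s))) * exp (a * μ * s) * ‖f s‖ := by gcongr
          _ = _ := by ring
    _ = _ := intervalIntegral.integral_const_mul _ _

lemma sq_integral_mul_le_integral_sq_mul_integral_sq {c d : ℝ} {φ ψ : ℝ → ℝ} (hcd : c ≤ d)
    (hφ : ContinuousOn φ (Icc c d)) (hψ : ContinuousOn ψ (Icc c d)) :
    (∫ u in c..d, φ u * ψ u) ^ 2 ≤ (∫ u in c..d, φ u ^ 2) * ∫ u in c..d, ψ u ^ 2 := by
  have hint : ∀ h : ℝ → ℝ, ContinuousOn h (Icc c d) → IntervalIntegrable h volume c d :=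
    fun h hh => (uIcc_of_le hcd ▸ hh).intervalIntegrable
  have hquad : ∀ x : ℝ, 0 ≤ (∫ u in c..d, ψ u ^ 2) * (x * x) +
      2 * (∫ u in c..d, φ u * ψ u) * x + ∫ u in c..d, φ u ^ 2 := by
    intro x
    have hexp : ∫ u in c..d, (x * ψ u + φ u) ^ 2 = ∫ u in c..d,
        ((x * x) * ψ u ^ 2 + (2 * x) * (φ u * ψ u) + φ u ^ 2) :=
      intervalIntegral.integral_congr fun u _ => by ring
    have hψψ : IntervalIntegrable (fun u => x * x * ψ u ^ 2) volume c d := hint _ (by fun_prop)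
    have hφψ : IntervalIntegrable (fun u => 2 * x * (φ u * ψ u)) volume c d := hint _ (by fun_prop)
    rw [intervalIntegral.integral_add (hψψ.add hφψ) (hint _ (by fun_prop)),
      intervalIntegral.integral_add hψψ hφψ, intervalIntegral.integral_const_mul,
      intervalIntegral.integral_const_mul] at hexp
    linarith [intervalIntegral.integral_nonneg (μ := volume) hcd
      fun u _ => sq_nonneg (x * ψ u + φ u)]
  have := discrim_le_zero hquad
  rw [discrim] at this
  linarith

lemma integral_exp_neg_mul_sub_le {μ c t : ℝ} (hμ : 0 < μ) :
    ∫ s in c..t, exp (-(μ * (t - s))) ≤ 1 / μ := by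
  have hprim : ∀ s ∈ uIcc c t, HasDerivAt (fun s => exp (-(μ * (t - s))) / μ)
      (exp (-(μ * (t - s)))) s := fun s _ => by
    have hin : HasDerivAt (fun s => -(μ * (t - s))) μ s := by
      simpa using (((hasDerivAt_id' s).const_sub t).const_mul μ).fun_neg
    exact (hin.exp.div_const μ).congr_deriv (by field_simp)
  rw [intervalIntegral.integral_eq_sub_of_hasDerivAt hprim
    (Continuous.intervalIntegrable (by fun_prop) _ _)]
  simp only [sub_self, mul_zero, neg_zero, exp_zero]
  have : 0 ≤ exp (-(μ * (t - c))) / μ := by positivity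
  linarith

lemma sq_integral_exp_neg_mul_le {μ c t : ℝ} {g : ℝ → ℝ} (hμ : 0 < μ) (hct : c ≤ t)
    (hg : ContinuousOn g (Icc c t)) :
    (∫ s in c..t, exp (-(μ * (t - s))) * g s) ^ 2 ≤
      1 / μ * ∫ s in c..t, exp (-(μ * (t - s))) * g s ^ 2 := by
  have hhalf : ∀ s, exp (-(μ * (t - s)) / 2) ^ 2 = exp (-(μ * (t - s))) := fun s => by
    rw [← exp_nat_mul]; congr 1; ring
  have hcs := sq_integral_mul_le_integral_sq_mul_integral_sq hct
    (φ := fun s => exp (-(μ * (t - s)) / 2)) (ψ := fun s => exp (-(μ * (t - s)) / 2) * g s)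
    (by fun_prop) (by fun_prop)
  simp only [← mul_assoc, ← sq, mul_pow, hhalf] at hcs
  calc _ ≤ _ := hcs
    _ ≤ _ := by
      gcongr
      · exact intervalIntegral.integral_nonneg hct fun s _ => by positivity
      · exact integral_exp_neg_mul_sub_le hμ

lemma sq_exp_mul_norm_integral_le {a μ ν c t : ℝ} {φ : ℝ → ℝ} {f : ℝ → ℂ} (ha : a ≤ 4)
    (hμ : 0 < μ) (hμν : μ ^ 3 = ν) (hct : c ≤ t)
    (hφ : ∀ s ∈ Icc c t, 3 * (t - s) ^ 3 ≤ φ t - φ s) (hf : ContinuousOn f (Icc c t)) :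
    exp (2 * a * μ * t) * ‖∫ s in c..t, (exp (-(ν * (φ t - φ s))) : ℂ) * f s‖ ^ 2 ≤
      exp 6 / μ * ∫ s in c..t, exp (-(μ * (t - s))) * (exp (2 * a * μ * s) * ‖f s‖ ^ 2) := by
  have hsq : ∀ x, exp (2 * x) = exp x ^ 2 := fun x => by rw [← exp_nat_mul]; norm_num
  have hbound := exp_mul_norm_integral_le ha hμ.le hμν hct hφ hf
  have hcs := sq_integral_exp_neg_mul_le hμ hct (g := fun s => exp (a * μ * s) * ‖f s‖)
    (by fun_prop)
  calc _ = (exp (a * μ * t) * ‖∫ s in c..t, (exp (-(ν * (φ t - φ s))) : ℂ) * f s‖) ^ 2 := by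
        rw [mul_pow, ← hsq]; ring_nf
    _ ≤ (exp 3 * ∫ s in c..t, exp (-(μ * (t - s))) * (exp (a * μ * s) * ‖f s‖)) ^ 2 := by
        gcongr
    _ ≤ exp 6 * (1 / μ * ∫ s in c..t, exp (-(μ * (t - s))) * (exp (a * μ * s) * ‖f s‖) ^ 2) := by
        rw [mul_pow, show (6 : ℝ) = 2 * 3 by norm_num, hsq]
        gcongr
    _ = _ := by
        have hweight : ∀ s, (exp (a * μ * s) * ‖f s‖) ^ 2 = exp (2 * a * μ * s) * ‖f s‖ ^ 2 :=
          fun s => by rw [mul_pow, ← hsq, ← mul_assoc, ← mul_assoc]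
        simp only [hweight]
        ring

lemma integral_exp_neg_mul_sub_mul_eq (μ c t : ℝ) (G : ℝ → ℝ) :
    ∫ s in c..t, exp (-(μ * (t - s))) * G s = exp (-(μ * t)) * ∫ s in c..t, exp (μ * s) * G s := by
  rw [← intervalIntegral.integral_const_mul]
  refine intervalIntegral.integral_congr fun s _ => ?_
  rw [← mul_assoc, ← exp_add]
  ring_nf

lemma continuousOn_primitive_of_le {G : ℝ → ℝ} {c T : ℝ} (hcT : c ≤ T)
    (hG : ContinuousOn G (Icc c T)) : ContinuousOn (fun t => ∫ s in c..t, G s) (Icc c T) := by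
  rw [← uIcc_of_le hcT]
  exact intervalIntegral.continuousOn_primitive_interval
    (by rw [uIcc_of_le hcT]; exact hG.integrableOn_Icc)

lemma continuousOn_integral_exp_neg_mul {μ c T : ℝ} {G : ℝ → ℝ} (hcT : c ≤ T)
    (hG : ContinuousOn G (Icc c T)) :
    ContinuousOn (fun t => ∫ s in c..t, exp (-(μ * (t - s))) * G s) (Icc c T) := by
  simp only [integral_exp_neg_mul_sub_mul_eq]
  exact ((by fun_prop : Continuous fun t => exp (-(μ * t))).continuousOn.mul
    (continuousOn_primitive_of_le hcT (by fun_prop)))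

lemma hasDerivAt_primitive_of_mem_Ioo {G : ℝ → ℝ} {c T t : ℝ}
    (hG : ContinuousOn G (Icc c T)) (ht : t ∈ Ioo c T) :
    HasDerivAt (fun t => ∫ s in c..t, G s) (G t) t :=
  intervalIntegral.integral_hasDerivAt_right
    ((hG.mono (Icc_subset_Icc_right ht.2.le)).intervalIntegrable_of_Icc ht.1.le)
    ((hG.mono Ioo_subset_Icc_self).stronglyMeasurableAtFilter isOpen_Ioo t ht)
    (hG.continuousAt (Icc_mem_nhds ht.1 ht.2))

lemma hasDerivAt_integral_exp_neg_mul {μ c T t : ℝ} {G : ℝ → ℝ}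
    (hG : ContinuousOn G (Icc c T)) (ht : t ∈ Ioo c T) :
    HasDerivAt (fun t => ∫ s in c..t, exp (-(μ * (t - s))) * G s)
      (G t - μ * ∫ s in c..t, exp (-(μ * (t - s))) * G s) t := by
  have hexp : HasDerivAt (fun t => exp (-(μ * t))) (exp (-(μ * t)) * -μ) t := by
    simpa using ((hasDerivAt_id' t).const_mul μ).fun_neg.exp
  rw [funext (integral_exp_neg_mul_sub_mul_eq μ c · G)]
  refine (hexp.mul (hasDerivAt_primitive_of_mem_Ioo (by fun_prop : ContinuousOn
    (fun s => exp (μ * s) * G s) (Icc c T)) ht)).congr_deriv ?_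
  have hinv : exp (-(μ * t)) * exp (μ * t) = 1 := by rw [← exp_add]; simp
  rw [integral_exp_neg_mul_sub_mul_eq, ← mul_assoc (exp _), hinv]
  ring

lemma integral_integral_exp_neg_mul_le {μ c T : ℝ} {G : ℝ → ℝ} (hμ : 0 < μ) (hcT : c ≤ T)
    (hG : ContinuousOn G (Icc c T)) (hG0 : ∀ s ∈ Icc c T, 0 ≤ G s) :
    ∫ t in c..T, ∫ s in c..t, exp (-(μ * (t - s))) * G s ≤ 1 / μ * ∫ s in c..T, G s := by
  set P := fun t => ∫ s in c..t, G s
  set H := fun t => ∫ s in c..t, exp (-(μ * (t - s))) * G s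
  have hHc : ContinuousOn H (Icc c T) := continuousOn_integral_exp_neg_mul hcT hG
  -- `H' = G - μ H`, so `(P - H) / μ` is a primitive of `H`
  have hderiv : ∀ t ∈ Ioo c T, HasDerivAt (fun t => (P t - H t) / μ) (H t) t := fun t ht =>
    ((hasDerivAt_primitive_of_mem_Ioo hG ht).sub
      (hasDerivAt_integral_exp_neg_mul hG ht)).div_const μ |>.congr_deriv (by field_simp; ring)
  rw [intervalIntegral.integral_eq_sub_of_hasDerivAt_of_le hcT
    ((continuousOn_primitive_of_le hcT hG).sub hHc |>.div_const μ)
    hderiv ((uIcc_of_le hcT ▸ hHc).intervalIntegrable)]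
  have hHT : 0 ≤ H T := intervalIntegral.integral_nonneg hcT fun s hs =>
    mul_nonneg (exp_pos _).le (hG0 s hs)
  have hP0 : P c = 0 := intervalIntegral.integral_same
  have hH0 : H c = 0 := intervalIntegral.integral_same
  change (P T - H T) / μ - (P c - H c) / μ ≤ 1 / μ * P T
  rw [hP0, hH0, sub_zero, zero_div, sub_zero, one_div_mul_eq_div]
  gcongr
  linarith

lemma integral_exp_neg_mul_le_integral {μ c t T : ℝ} {G : ℝ → ℝ} (hμ : 0 ≤ μ)
    (ht : t ∈ Icc c T) (hG : ContinuousOn G (Icc c T)) (hG0 : ∀ s ∈ Icc c T, 0 ≤ G s) :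
    ∫ s in c..t, exp (-(μ * (t - s))) * G s ≤ ∫ s in c..T, G s := by
  have hGt : ∀ s ∈ Icc c t, 0 ≤ G s := fun s hs => hG0 s ⟨hs.1, hs.2.trans ht.2⟩
  calc _ ≤ ∫ s in c..t, G s :=
        intervalIntegral_mono_of_nonneg ht.1 (fun s hs => mul_nonneg (exp_pos _).le (hGt s hs))
          (fun s hs => mul_le_of_le_one_left (hGt s hs)
            (exp_le_one_iff.2 (neg_nonpos.2 (mul_nonneg hμ (sub_nonneg.2 hs.2)))))
          ((hG.mono (Icc_subset_Icc_right ht.2)).intervalIntegrable_of_Icc ht.1)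
    _ ≤ _ := intervalIntegral.integral_mono_interval le_rfl ht.1 ht.2
        ((ae_restrict_iff' measurableSet_Ioc).2 (Filter.Eventually.of_forall
          fun s hs => hG0 s (Ioc_subset_Icc_self hs)))
        (hG.intervalIntegrable_of_Icc (ht.1.trans ht.2))

lemma le_exp_six_mul_rpow_of_sq_le {ν x I : ℝ} (hν : 0 < ν) (hx : 0 ≤ x) (hI : 0 ≤ I)
    (h : x ^ 2 ≤ exp 6 / ν ^ ((1 : ℝ) / 3) * I) :
    x ≤ exp 6 * ν ^ (-(1 : ℝ) / 6) * I ^ ((1 : ℝ) / 2) := by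
  have hν16 : (ν ^ (-(1 : ℝ) / 6)) ^ 2 = 1 / ν ^ ((1 : ℝ) / 3) := by
    rw [← rpow_natCast, ← rpow_mul hν.le, one_div, ← rpow_neg hν.le]; norm_num
  calc x ≤ exp 3 * ν ^ (-(1 : ℝ) / 6) * I ^ ((1 : ℝ) / 2) := by
        rw [← pow_le_pow_iff_left₀ hx (by positivity) two_ne_zero, mul_pow, mul_pow, hν16,
          ← sqrt_eq_rpow, sq_sqrt hI, ← exp_nat_mul]
        refine h.trans_eq ?_
        rw [div_eq_mul_one_div]
        norm_num
    _ ≤ _ := by gcongr; norm_num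

/-- Fixed-frequency enhanced-dissipation estimate for the Duhamel term driven by `f₂`:
with `γ(t) = (2π)²(k² + (η − k t)² + l²)`, `γ₁(t) = ∫₁^t γ(s) ds` and
`F₂(t) = ∫₁^t e^{−ν(γ₁(t)−γ₁(s))} f₂(s) ds`, one has
`sup_{t∈[1,T]} e^{aν^{1/3}t}|F₂(t)| ≤ C ν^{−1/6} ‖e^{aν^{1/3}s} f₂‖_{L²(1,T)}` and
`‖e^{aν^{1/3}t}F₂‖²_{L²(1,T)} ≤ C ν^{−2/3} ‖e^{aν^{1/3}s} f₂‖²_{L²(1,T)}`. -/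
theorem stmt6 : ∃ C : ℝ, 0 < C ∧ ∀ (ν T a : ℝ) (k l : ℤ) (η : ℝ) (f₂ : ℝ → ℂ),
    0 < ν → ν < 1 → 1 < T → 0 ≤ a → a ≤ 4 → k ≠ 0 →
    ContinuousOn f₂ (Set.Icc 1 T) →
    ∀ γ γ₁ : ℝ → ℝ,
    (∀ t, γ t = (2 * Real.pi) ^ 2 * ((k : ℝ) ^ 2 + (η - (k : ℝ) * t) ^ 2 + (l : ℝ) ^ 2)) →
    (∀ t, γ₁ t = ∫ s in (1:ℝ)..t, γ s) →
    ∀ F₂ : ℝ → ℂ,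
    (∀ t, F₂ t = ∫ s in (1:ℝ)..t,
        (Real.exp (-(ν * (γ₁ t - γ₁ s))) : ℂ) * f₂ s) →
    (∀ t ∈ Set.Icc (1:ℝ) T,
        Real.exp (a * ν ^ ((1:ℝ)/3) * t) * ‖F₂ t‖ ≤
          C * ν ^ (-(1:ℝ)/6) *
            (∫ s in (1:ℝ)..T,
              Real.exp (2 * a * ν ^ ((1:ℝ)/3) * s) * ‖f₂ s‖ ^ 2) ^ ((1:ℝ)/2)) ∧
    (∫ t in (1:ℝ)..T, Real.exp (2 * a * ν ^ ((1:ℝ)/3) * t) * ‖F₂ t‖ ^ 2) ≤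
        C * ν ^ (-(2:ℝ)/3) *
          ∫ s in (1:ℝ)..T, Real.exp (2 * a * ν ^ ((1:ℝ)/3) * s) * ‖f₂ s‖ ^ 2 := by
  refine ⟨exp 6, exp_pos 6, ?_⟩
  intro ν T a k l η f₂ hν _ hT _ ha4 hk hf γ γ₁ hγ hγ₁ F₂ hF₂
  obtain rfl : γ = shearSymbol k l η := funext hγ
  set μ := ν ^ ((1 : ℝ) / 3)
  have hμ : 0 < μ := rpow_pos_of_pos hν _
  have hμν : μ ^ 3 = ν := by rw [← rpow_natCast, ← rpow_mul hν.le]; norm_num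
  set G := fun s => exp (2 * a * μ * s) * ‖f₂ s‖ ^ 2
  have hG : ContinuousOn G (Icc 1 T) := by fun_prop
  have hG0 : ∀ s ∈ Icc 1 T, 0 ≤ G s := fun s _ => by positivity
  have hpt : ∀ t ∈ Icc 1 T, exp (2 * a * μ * t) * ‖F₂ t‖ ^ 2 ≤
      exp 6 / μ * ∫ s in 1..t, exp (-(μ * (t - s))) * G s := fun t ht => by
    rw [hF₂]
    exact sq_exp_mul_norm_integral_le ha4 hμ hμν ht.1
      (fun s hs => three_mul_cube_le_sub_of_primitive hk hγ₁ hs.2)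
      (hf.mono (Icc_subset_Icc_right ht.2))
  refine ⟨fun t ht => le_exp_six_mul_rpow_of_sq_le hν (by positivity)
    (intervalIntegral.integral_nonneg hT.le hG0) ?_, ?_⟩
  · calc _ = exp (2 * a * μ * t) * ‖F₂ t‖ ^ 2 := by rw [mul_pow, ← exp_nat_mul]; ring_nf
      _ ≤ _ := (hpt t ht).trans (by gcongr; exact integral_exp_neg_mul_le_integral hμ.le ht hG hG0)
  · calc _ ≤ ∫ t in 1..T, exp 6 / μ * ∫ s in 1..t, exp (-(μ * (t - s))) * G s :=
          intervalIntegral_mono_of_nonneg hT.le (fun t _ => by positivity) hpt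
            ((continuousOn_const.mul (continuousOn_integral_exp_neg_mul hT.le hG))
              |>.intervalIntegrable_of_Icc hT.le)
      _ = exp 6 / μ * ∫ t in 1..T, ∫ s in 1..t, exp (-(μ * (t - s))) * G s :=
          intervalIntegral.integral_const_mul _ _
      _ ≤ exp 6 / μ * (1 / μ * ∫ s in 1..T, G s) := by
          gcongr
          exact integral_integral_exp_neg_mul_le hμ hT.le hG hG0
      _ = _ := by
          rw [show ν ^ (-(2 : ℝ) / 3) = μ⁻¹ * μ⁻¹ by rw [← rpow_neg hν.le, ← rpow_add hν]; norm_num]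
          ring
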